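/- Let T be a balanced tree with k levels (k ≥ 2) and L its graph Laplacian. Let f be a stratified function on the vertices and let g = (g(0), …, g(k−1)) be its vector of level values, i.e. f(v) = g(level of v) for every vertex v. Then Lf = λf if and only if S^{(0)} g = λ g. In particular, λ admits a nonzero stratified eigenfunction of L if and only if λ is an eigenvalue of S^{(0)}. -/

import Mathlib

open scoped Classical

/-- Vertices of the balanced tree with `k` levels and branching sequence `c`:
a vertex at level `l` (`0 ≤ l ≤ k-1`) is a function assigning to each `i < l` a
label in `Fin (c i)` (the label of the level-`(i+1)` ancestor among its siblings). -/
abbrev BTVert (k : ℕ) (c : ℕ → ℕ) : Type := Σ l : Fin k, ∀ i : Fin l.val, Fin (c i.val)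

/-- `p` is the parent of `v` in the balanced tree. -/
def IsParentOf {k : ℕ} {c : ℕ → ℕ} (p v : BTVert k c) : Prop :=
  ∃ h : p.1.val + 1 = v.1.val,
    ∀ i : Fin p.1.val, v.2 ⟨i.val, by have := i.isLt; omega⟩ = p.2 i

/-- The balanced tree as a simple graph: each non-root vertex is adjacent to its parent. -/
def btGraph (k : ℕ) (c : ℕ → ℕ) : SimpleGraph (BTVert k c) where
  Adj u v := IsParentOf u v ∨ IsParentOf v u
  symm := ⟨fun u v h => h.symm⟩
  loopless := ⟨fun v h => by
    rcases h with ⟨h, -⟩ | ⟨h, -⟩ <;> omega⟩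

/-- The root (the unique vertex at level 0). -/
def btRoot (k : ℕ) (c : ℕ → ℕ) (hk : 0 < k) : BTVert k c :=
  ⟨⟨0, hk⟩, fun i => i.elim0⟩

/-- `u` belongs to the maximal subtree rooted at `v` (`u` is `v` or a descendant of `v`). -/
def InSubtree {k : ℕ} {c : ℕ → ℕ} (v u : BTVert k c) : Prop :=
  ∃ h : v.1.val ≤ u.1.val,
    ∀ i : Fin v.1.val, u.2 ⟨i.val, by have := i.isLt; omega⟩ = v.2 i

/-- A function on the vertices is stratified if it only depends on the level. -/
def Stratified {k : ℕ} {c : ℕ → ℕ} (f : BTVert k c → ℝ) : Prop :=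
  ∀ u v : BTVert k c, u.1 = v.1 → f u = f v

/-- Number of vertices at level `l`: `n(l) = c(0) ⋯ c(l-1)`. -/
def nlev (c : ℕ → ℕ) (l : ℕ) : ℕ := ∏ i ∈ Finset.range l, c i

/-- The common degree `d(l)` of the vertices at level `l`. -/
def branchDeg (k : ℕ) (c : ℕ → ℕ) (l : ℕ) : ℕ :=
  if l = 0 then c 0 else if l = k - 1 then 1 else c l + 1

/-- The symmetric tridiagonal matrix `T^{(l0)}` with diagonal `d(l0), …, d(k-1)` and
off-diagonal `√c(l0), …, √c(k-2)`. -/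
noncomputable def matT (k : ℕ) (c : ℕ → ℕ) (l0 : ℕ) :
    Matrix (Fin (k - l0)) (Fin (k - l0)) ℝ := fun i j =>
  if i = j then (branchDeg k c (l0 + i.val) : ℝ)
  else if i.val + 1 = j.val then Real.sqrt (c (l0 + i.val))
  else if j.val + 1 = i.val then Real.sqrt (c (l0 + j.val))
  else 0

/-- The tridiagonal matrix `S^{(l0)}` with diagonal `d(l0), …, d(k-1)`, subdiagonal
entries `-1` and superdiagonal entries `-c(l0), …, -c(k-2)`. -/
def matS (k : ℕ) (c : ℕ → ℕ) (l0 : ℕ) :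
    Matrix (Fin (k - l0)) (Fin (k - l0)) ℝ := fun i j =>
  if i = j then (branchDeg k c (l0 + i.val) : ℝ)
  else if i.val + 1 = j.val then -(c (l0 + i.val) : ℝ)
  else if j.val + 1 = i.val then -1
  else 0

/-- `lam` is an eigenvalue of the matrix `A`. -/
def IsEigenvalue {V : Type*} [Fintype V] (A : Matrix V V ℝ) (lam : ℝ) : Prop :=
  ∃ f : V → ℝ, f ≠ 0 ∧ A.mulVec f = lam • f

/-- The (geometric) multiplicity of `lam` as an eigenvalue of `A`. -/
noncomputable def eigMult {V : Type*} [Fintype V] (A : Matrix V V ℝ) (lam : ℝ) : ℕ :=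
  Module.finrank ℝ
    ↥(LinearMap.ker (A.mulVecLin - lam • (LinearMap.id : (V → ℝ) →ₗ[ℝ] (V → ℝ))))

/-- The Dirichlet Laplacian on a subset `Ω` of the vertices of the balanced tree:
the principal submatrix of the Laplacian with rows and columns indexed by `Ω`. -/
noncomputable def dirichletLap (k : ℕ) (c : ℕ → ℕ) (Ω : Set (BTVert k c)) :
    Matrix Ω Ω ℝ := fun u v => (btGraph k c).lapMatrix ℝ u.1 v.1

/-! A vertex at level `l` has one parent (when `l > 0`) and `c l` children (when `l + 1 < k`),
so on a function `g ∘ level` the row of the Laplacian at `v` reads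
`d(l) g(l) - g(l - 1) - c(l) g(l + 1)`, which is row `l` of `S⁽⁰⁾ g`. As every level is
nonempty, `g ↦ g ∘ level` is injective, and it identifies the stratified functions with the
vectors `Fin k → ℝ`. -/

open Finset Function Matrix

variable {k : ℕ} {c : ℕ → ℕ} {M : Type*} [AddCommMonoid M]

namespace BTVert

lemma ext {u w : BTVert k c} (h : u.1.val = w.1.val)
    (hlabel : ∀ n (hu : n < u.1.val) (hw : n < w.1.val), u.2 ⟨n, hu⟩ = w.2 ⟨n, hw⟩) :
    u = w := by
  obtain ⟨⟨l, _⟩, _⟩ := u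
  obtain ⟨⟨m, _⟩, _⟩ := w
  obtain rfl : l = m := h
  exact Sigma.ext rfl (heq_of_eq (funext fun i => hlabel i i.isLt i.isLt))

lemma fst_surjective (hc : ∀ l, l + 1 < k → 0 < c l) :
    Surjective (Sigma.fst : BTVert k c → Fin k) := fun i =>
  ⟨⟨i, fun j => ⟨0, hc j (by have : j.val < i.val := j.isLt; omega)⟩⟩, rfl⟩

def parent (v : BTVert k c) (h : 0 < v.1.val) : BTVert k c :=
  ⟨⟨v.1 - 1, by omega⟩, fun i =>
    v.2 ⟨i, by have : i.val < v.1.val - 1 := i.isLt; omega⟩⟩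

lemma isParentOf_iff_eq_parent {u v : BTVert k c} (h : 0 < v.1.val) :
    IsParentOf u v ↔ u = v.parent h := by
  constructor
  · rintro ⟨hl, hlabel⟩
    exact ext (by simp [parent]; omega) fun n hu _ => (hlabel ⟨n, hu⟩).symm
  · rintro rfl
    exact ⟨Nat.sub_add_cancel h, fun _ => rfl⟩

def child (v : BTVert k c) (h : v.1.val + 1 < k) (j : Fin (c v.1.val)) : BTVert k c :=
  ⟨⟨v.1 + 1, h⟩, fun i =>
    if hi : i.val < v.1.val then v.2 ⟨i, hi⟩
    else Fin.cast (congrArg c (by have : i.val < v.1.val + 1 := i.isLt; omega)) j⟩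

lemma child_injective (v : BTVert k c) (h : v.1.val + 1 < k) : Injective (v.child h) := by
  intro j j' hj
  have := congrFun (eq_of_heq (Sigma.mk.inj_iff.1 hj).2) ⟨v.1, lt_add_one _⟩
  exact Fin.ext (by simpa using congrArg Fin.val this)

lemma isParentOf_iff_exists_child {u v : BTVert k c} (h : v.1.val + 1 < k) :
    IsParentOf v u ↔ ∃ j, v.child h j = u := by
  constructor
  · rintro ⟨hl, hlabel⟩
    refine ⟨u.2 ⟨v.1, by omega⟩, ext (by simp [child, hl]) fun n hu _ => ?_⟩
    simp only [child]
    split_ifs with hn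
    · exact (hlabel ⟨n, hn⟩).symm
    · obtain rfl : n = v.1.val := by simp [child] at hu; omega
      rfl
  · rintro ⟨j, rfl⟩
    exact ⟨rfl, fun i => dif_pos i.isLt⟩

lemma sum_parents (v : BTVert k c) (F : BTVert k c → M) :
    ∑ u with IsParentOf u v, F u = if h : 0 < v.1.val then F (v.parent h) else 0 := by
  split_ifs with h
  · simp [isParentOf_iff_eq_parent h, filter_eq']
  · exact sum_eq_zero fun u hu => absurd (mem_filter.1 hu).2.1 (by omega)

lemma sum_children (v : BTVert k c) (F : BTVert k c → M) :
    ∑ u with IsParentOf v u, F u =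
      if h : v.1.val + 1 < k then ∑ j, F (v.child h j) else 0 := by
  split_ifs with h
  · have : ({u | IsParentOf v u} : Finset (BTVert k c)) =
        univ.map ⟨_, child_injective v h⟩ := by
      ext u; simp [isParentOf_iff_exists_child h]
    rw [this, sum_map]; rfl
  · exact sum_eq_zero fun u hu => absurd (mem_filter.1 hu).2.1 (by have := u.1.isLt; omega)

end BTVert

lemma sum_neighborFinset_btGraph (v : BTVert k c) (F : BTVert k c → M) :
    ∑ u ∈ (btGraph k c).neighborFinset v, F u =
      (if h : 0 < v.1.val then F (v.parent h) else 0) +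
        if h : v.1.val + 1 < k then ∑ j, F (v.child h j) else 0 := by
  have hdisj : Disjoint ({u | IsParentOf v u} : Finset (BTVert k c))
      ({u | IsParentOf u v} : Finset _) :=
    disjoint_filter.2 fun u _ h₁ h₂ => by have := h₁.1; have := h₂.1; omega
  rw [← BTVert.sum_parents, ← BTVert.sum_children, add_comm, ← sum_union hdisj, ← filter_or,
    SimpleGraph.neighborFinset_eq_filter]
  exact sum_congr (filter_congr fun _ _ => Iff.rfl) fun _ _ => rfl

lemma sum_neighborFinset_btGraph_comp_fst (v : BTVert k c) (g : Fin k → M) :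
    ∑ u ∈ (btGraph k c).neighborFinset v, g u.1 =
      (if h : 0 < v.1.val then g ⟨v.1 - 1, by omega⟩ else 0) +
        if h : v.1.val + 1 < k then c v.1 • g ⟨v.1 + 1, h⟩ else 0 := by
  rw [sum_neighborFinset_btGraph]
  simp [BTVert.parent, BTVert.child]

-- For `k = 1` the root is isolated, while `branchDeg 1 c 0 = c 0`.
lemma degree_btGraph (hk : 2 ≤ k) (v : BTVert k c) :
    (btGraph k c).degree v = branchDeg k c v.1 := by
  rw [← SimpleGraph.card_neighborFinset_eq_degree, card_eq_sum_ones,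
    sum_neighborFinset_btGraph_comp_fst v (fun _ => 1)]
  obtain ⟨l, hl⟩ := v.1
  simp only [smul_eq_mul, mul_one, branchDeg]
  split_ifs <;> subst_vars <;> omega

lemma Fin.sum_ite_val_eq {n : ℕ} (a : ℕ) (F : Fin n → M) :
    ∑ j : Fin n, (if a = j.val then F j else 0) = if h : a < n then F ⟨a, h⟩ else 0 := by
  split_ifs with h
  · rw [← Fintype.sum_ite_eq ⟨a, h⟩ F]
    exact sum_congr rfl fun j _ => if_congr (by rw [Fin.ext_iff]) rfl rfl
  · exact sum_eq_zero fun j _ => if_neg (by omega)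

lemma matS_mulVec_apply (l0 : ℕ) (g : Fin (k - l0) → ℝ) (i : Fin (k - l0)) :
    (matS k c l0 *ᵥ g) i = branchDeg k c (l0 + i) * g i
      - (if h : 0 < i.val then g ⟨i - 1, by omega⟩ else 0)
      - if h : i.val + 1 < k - l0 then c (l0 + i) * g ⟨i + 1, h⟩ else 0 := by
  have hrow : ∀ j, matS k c l0 i j * g j = (if i = j then branchDeg k c (l0 + i) * g j else 0)
      - (if 0 < i.val then if i.val - 1 = j.val then g j else 0 else 0)
      - (if i.val + 1 = j.val then c (l0 + i) * g j else 0) := by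
    intro j
    simp only [matS]
    split_ifs <;> first | (exfalso; omega) | ring
  simp only [mulVec, dotProduct, hrow, sum_sub_distrib, Fin.sum_ite_val_eq, sum_ite_irrel,
    Fintype.sum_ite_eq, sum_const_zero]
  split_ifs <;> first | rfl | (exfalso; omega)

lemma lapMatrix_btGraph_mulVec_comp_fst (hk : 2 ≤ k) (g : Fin k → ℝ) :
    (btGraph k c).lapMatrix ℝ *ᵥ (g ∘ Sigma.fst) = (matS k c 0 *ᵥ g) ∘ Sigma.fst := by
  ext v
  rw [Function.comp_apply, matS_mulVec_apply 0 g v.1]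
  simp only [SimpleGraph.lapMatrix_mulVec_apply, degree_btGraph hk, Function.comp_apply,
    sum_neighborFinset_btGraph_comp_fst, zero_add, Nat.sub_zero, nsmul_eq_mul]
  exact sub_add_eq_sub_sub ..

lemma lapMatrix_btGraph_mulVec_comp_fst_eq_smul_iff (hk : 2 ≤ k)
    (hc : ∀ l, l + 1 < k → 0 < c l) (lam : ℝ) (g : Fin k → ℝ) :
    (btGraph k c).lapMatrix ℝ *ᵥ (g ∘ Sigma.fst) = lam • (g ∘ Sigma.fst) ↔
      matS k c 0 *ᵥ g = lam • g := by
  rw [lapMatrix_btGraph_mulVec_comp_fst hk, ← Pi.smul_comp,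
    (BTVert.fst_surjective hc).right_cancellable]

lemma Stratified.exists_eq_comp_fst (hc : ∀ l, l + 1 < k → 0 < c l) {f : BTVert k c → ℝ}
    (hf : Stratified f) : ∃ g : Fin k → ℝ, f = g ∘ Sigma.fst :=
  ⟨f ∘ surjInv (BTVert.fst_surjective hc),
    funext fun v => hf _ _ (surjInv_eq (BTVert.fst_surjective hc) v.1).symm⟩

/-- for a stratified function `f` with vector of level values `g`,
`Lf = λf` iff `S⁽⁰⁾ g = λ g`; in particular `λ` has a nonzero stratified eigenfunction of `L`
iff `λ` is an eigenvalue of `S⁽⁰⁾`. -/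
theorem stratified_eigen_iff_matS (k : ℕ) (hk : 2 ≤ k) (c : ℕ → ℕ)
    (hc : ∀ l, l ≤ k - 2 → 1 ≤ c l) (lam : ℝ) (f : BTVert k c → ℝ) (g : Fin k → ℝ)
    (hfg : ∀ v : BTVert k c, f v = g v.1) :
    (((btGraph k c).lapMatrix ℝ).mulVec f = lam • f ↔
        (matS k c 0).mulVec g = lam • g) ∧
      ((∃ f' : BTVert k c → ℝ, f' ≠ 0 ∧ Stratified f' ∧
          ((btGraph k c).lapMatrix ℝ).mulVec f' = lam • f') ↔
        IsEigenvalue (matS k c 0) lam) := by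
  replace hc : ∀ l, l + 1 < k → 0 < c l := fun l hl => hc l (by omega)
  have eigen_iff := lapMatrix_btGraph_mulVec_comp_fst_eq_smul_iff hk hc lam
  obtain rfl : f = g ∘ Sigma.fst := funext hfg
  refine ⟨eigen_iff g, ?_, ?_⟩
  · rintro ⟨f', hne, hstrat, heig⟩
    obtain ⟨g', rfl⟩ := hstrat.exists_eq_comp_fst hc
    exact ⟨g', fun h => hne (h ▸ rfl), (eigen_iff g').1 heig⟩
  · rintro ⟨g', hne, heig⟩
    exact ⟨g' ∘ Sigma.fst, fun h => hne ((BTVert.fst_surjective hc).injective_comp_right h),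
      fun _ _ huv => congrArg g' huv, (eigen_iff g').2 heig⟩
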